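/- (Pizzetti's formula) Let m ≥ 1 and let R : ℝ^m → ℝ be a polynomial function. Then ∫_{S^{m−1}} R dσ = ∑_{k=0}^{∞} (2π^{m/2}/(4^{k} · k! · Γ(k + m/2))) · (Δ^{k} R)(0), where the sum is finite since Δ^{k} R = 0 once 2k exceeds the degree of R. In particular the integral of a homogeneous polynomial of odd degree over S^{m−1} vanishes, and for R homogeneous of even degree 2k the integral equals (2π^{m/2}/(4^{k} k! Γ(k + m/2))) · Δ^{k} R, a constant. -/

import Mathlib

open MeasureTheory

noncomputable section

/-- The ordinary Laplacian `Δ = ∑_{i=1}^m ∂²/∂x_i²` on polynomials on `ℝ^m`. -/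
def polyLap (m : ℕ) : Module.End ℝ (MvPolynomial (Fin m) ℝ) :=
  ∑ i : Fin m, (MvPolynomial.pderiv i).toLinearMap ∘ₗ (MvPolynomial.pderiv i).toLinearMap

/-- The integral of a polynomial over the unit sphere `S^{m-1}` with respect to the
Lebesgue surface measure (`volume.toSphere`, whose total mass is `2π^{m/2}/Γ(m/2)`). -/
def sphereInt (m : ℕ) (R : MvPolynomial (Fin m) ℝ) : ℝ :=
  ∫ ξ : Metric.sphere (0 : EuclideanSpace ℝ (Fin m)) 1,
    MvPolynomial.eval (fun i => (ξ : EuclideanSpace ℝ (Fin m)) i) R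
    ∂((volume : Measure (EuclideanSpace ℝ (Fin m))).toSphere)

end

/-!
By linearity it suffices to treat a monomial `x^α`, and both sides are computed through the
Gaussian integral `∫_{ℝ^m} x^α e^{-|x|²} dx`. By Fubini it is a product of one-dimensional
moments `∫ t^n e^{-t²} dt = √π (n-1)‼ / √2^n` (zero for odd `n`); in polar coordinates it is
`(∫_{S^{m-1}} x^α dσ) · Γ((m + |α|)/2) / 2`. On the other side, `(Δ^k x^α)(0)` vanishes unless
`|α| = 2k`, and then equals `2^k k! ∏ (α_i - 1)‼` (zero if some `α_i` is odd): the same moments.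
-/

open MvPolynomial Finset Real Set
open scoped Nat

/-- The `n`-th moment of the standard Gaussian distribution. -/
def gaussMoment (n : ℕ) : ℕ := if Even n then (n - 1)‼ else 0

lemma gaussMoment_eq_zero_iff {n : ℕ} : gaussMoment n = 0 ↔ Odd n := by
  simp [gaussMoment, (Nat.doubleFactorial_pos _).ne', Nat.not_even_iff_odd]

lemma mul_pred_mul_gaussMoment_sub_two (n : ℕ) :
    n * (n - 1) * gaussMoment (n - 2) = n * gaussMoment n := by
  rcases n with _ | _ | n
  · rfl
  · rfl
  · have h_even : Even (n + 2) ↔ Even n := by simp [Nat.even_add]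
    simp only [gaussMoment, h_even, show n + 1 + 1 - 2 = n by omega,
      show n + 1 + 1 - 1 = n + 1 by omega]
    split_ifs
    · rw [Nat.doubleFactorial_add_one]; ring
    · simp

lemma prod_gaussMoment_eq_zero_of_odd {ι : Type*} {s : Finset ι} {α : ι → ℕ}
    (h : Odd (∑ i ∈ s, α i)) : ∏ i ∈ s, gaussMoment (α i) = 0 := by
  contrapose! h
  rw [Nat.not_odd_iff_even]
  refine even_sum _ fun i hi => ?_
  rw [← Nat.not_odd_iff_even, ← gaussMoment_eq_zero_iff]
  exact prod_ne_zero_iff.mp h i hi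

section Multiindex

variable {σ : Type*}

lemma degree_sub_single_add {α : σ →₀ ℕ} {i : σ} {n : ℕ} (h : n ≤ α i) :
    (α - Finsupp.single i n).degree + n = α.degree := by
  conv_rhs => rw [← tsub_add_cancel_of_le (Finsupp.single_le_iff.mpr h)]
  rw [map_add, Finsupp.degree_single]

variable [Fintype σ] [DecidableEq σ]

lemma prod_sub_single_apply {M : Type*} [CommMonoid M] (f : ℕ → M) (α : σ →₀ ℕ) (i : σ)
    (n : ℕ) :
    ∏ j, f ((α - Finsupp.single i n) j) = f (α i - n) * ∏ j ∈ univ.erase i, f (α j) := by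
  rw [← mul_prod_erase univ _ (mem_univ i)]
  congr 1
  · simp
  · refine prod_congr rfl fun j hj => ?_
    simp [Finsupp.single_eq_of_ne (ne_of_mem_erase hj)]

noncomputable def lapMoment (k : ℕ) (α : σ →₀ ℕ) : ℕ :=
  if α.degree = 2 * k then 2 ^ k * k ! * ∏ i, gaussMoment (α i) else 0

lemma mul_pred_mul_lapMoment_sub_single (k : ℕ) (α : σ →₀ ℕ) (i : σ) :
    α i * (α i - 1) * lapMoment k (α - Finsupp.single i 2) =
      if α.degree = 2 * (k + 1) then 2 ^ k * k ! * (α i * ∏ j, gaussMoment (α j)) else 0 := by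
  have key := mul_pred_mul_gaussMoment_sub_two (α i)
  rw [lapMoment, prod_sub_single_apply, ← mul_prod_erase univ _ (mem_univ i),
    ← mul_assoc (α i), ← key]
  rcases lt_or_ge (α i) 2 with h | h
  · obtain h0 | h1 : α i = 0 ∨ α i = 1 := by omega
    · simp [h0]
    · simp [h1]
  · have h_deg := degree_sub_single_add h
    simp only [show (α - Finsupp.single i 2).degree = 2 * k ↔ α.degree = 2 * (k + 1) by omega]
    split_ifs <;> ring

lemma sum_mul_pred_mul_lapMoment_sub_single (k : ℕ) (α : σ →₀ ℕ) :
    ∑ i, α i * (α i - 1) * lapMoment k (α - Finsupp.single i 2) = lapMoment (k + 1) α := by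
  simp only [mul_pred_mul_lapMoment_sub_single]
  rw [lapMoment]
  by_cases h : α.degree = 2 * (k + 1)
  · simp only [h, if_true]
    rw [← mul_sum, ← sum_mul, ← Finsupp.degree_eq_sum, h, Nat.factorial_succ, pow_succ]
    ring
  · simp [h]

end Multiindex

section Laplacian

variable {m : ℕ}

lemma polyLap_monomial (α : Fin m →₀ ℕ) (c : ℝ) :
    polyLap m (monomial α c) =
      ∑ i, monomial (α - Finsupp.single i 2) (c * (α i * (α i - 1 : ℕ))) := by
  rw [polyLap, LinearMap.sum_apply]
  refine sum_congr rfl fun i _ => ?_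
  change pderiv i (pderiv i (monomial α c)) = _
  rw [pderiv_monomial, pderiv_monomial, tsub_tsub, ← Finsupp.single_add, Finsupp.tsub_apply,
    Finsupp.single_eq_same, mul_assoc]

lemma eval_zero_polyLap_pow_monomial (k : ℕ) (α : Fin m →₀ ℕ) (c : ℝ) :
    eval (fun _ => 0) ((polyLap m ^ k) (monomial α c)) = c * lapMoment k α := by
  induction k generalizing α c with
  | zero =>
    rw [pow_zero, Module.End.one_apply, eval_zero', constantCoeff_monomial, lapMoment]
    by_cases h : α = 0
    · simp [h, gaussMoment]
    · simp [h, Finsupp.degree_eq_zero_iff]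
  | succ k ih =>
    rw [pow_succ, Module.End.mul_apply, polyLap_monomial, map_sum, map_sum,
      ← sum_mul_pred_mul_lapMoment_sub_single]
    simp only [ih, Nat.cast_sum, Nat.cast_mul, mul_sum]
    refine sum_congr rfl fun i _ => ?_
    ring

lemma eval_zero_polyLap_pow_eq_zero_of_isHomogeneous {R : MvPolynomial (Fin m) ℝ} {d k : ℕ}
    (hR : R.IsHomogeneous d) (hdk : d ≠ 2 * k) : eval (fun _ => 0) ((polyLap m ^ k) R) = 0 := by
  rw [← R.support_sum_monomial_coeff, map_sum, map_sum]
  refine sum_eq_zero fun α hα => ?_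
  have h_deg : α.degree ≠ 2 * k := fun h =>
    mem_support_iff.mp hα (hR.coeff_eq_zero (by omega))
  rw [eval_zero_polyLap_pow_monomial, lapMoment, if_neg h_deg, Nat.cast_zero, mul_zero]

end Laplacian

lemma sqrt_pow_eq_rpow {x : ℝ} (hx : 0 ≤ x) (n : ℕ) : √x ^ n = x ^ ((n : ℝ) / 2) := by
  rw [sqrt_eq_rpow, ← rpow_natCast, ← rpow_mul hx, one_div_mul_eq_div]

lemma integral_Ioi_pow_mul_exp_neg_sq (n : ℕ) :
    ∫ r in Ioi (0 : ℝ), r ^ n * exp (-r ^ 2) = Gamma ((n + 1) / 2) / 2 := by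
  have h := integral_rpow_mul_exp_neg_rpow (p := 2) (q := n) two_pos
    (by linarith [(Nat.cast_nonneg n : (0 : ℝ) ≤ n)])
  simp only [rpow_natCast, rpow_two] at h
  rw [h]
  ring

lemma integral_pow_mul_exp_neg_sq (n : ℕ) :
    ∫ t : ℝ, t ^ n * exp (-t ^ 2) = gaussMoment n * √π / √2 ^ n := by
  rcases Nat.even_or_odd n with ⟨b, rfl⟩ | h_odd
  · have h_abs := integral_comp_abs (f := fun t => t ^ (b + b) * exp (-t ^ 2))
    simp only [(Even.add_self b).pow_abs, sq_abs] at h_abs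
    rw [h_abs, integral_Ioi_pow_mul_exp_neg_sq, gaussMoment, if_pos (Even.add_self b),
      ← two_mul, pow_mul, sq_sqrt zero_le_two]
    push_cast
    rw [show ((2 * b : ℝ) + 1) / 2 = b + 1 / 2 by ring, Gamma_nat_add_half]
    ring
  · rw [gaussMoment, if_neg (Nat.not_even_iff_odd.mpr h_odd), Nat.cast_zero, zero_mul, zero_div]
    have h_neg := integral_neg_eq_self (fun t : ℝ => t ^ n * exp (-t ^ 2)) volume
    simp only [h_odd.neg_pow, neg_sq, neg_mul, integral_neg] at h_neg
    linarith

lemma EuclideanSpace.integral_prod {ι : Type*} [Fintype ι] (f : ι → ℝ → ℝ) :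
    ∫ x : EuclideanSpace ℝ ι, ∏ i, f i (x i) = ∏ i, ∫ t, f i t := by
  rw [← integral_fintype_prod_eq_prod, ← volume_pi,
    ← (EuclideanSpace.volume_preserving_symm_measurableEquiv_toLp ι).integral_comp
      (MeasurableEquiv.measurableEmbedding _)]
  rfl

lemma integral_prod_pow_mul_exp_neg_norm_sq {ι : Type*} [Fintype ι] (α : ι → ℕ) :
    ∫ x : EuclideanSpace ℝ ι, (∏ i, x i ^ α i) * exp (-‖x‖ ^ 2) =
      ∏ i, ∫ t, t ^ α i * exp (-t ^ 2) := by
  rw [← EuclideanSpace.integral_prod]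
  congr 1 with x
  rw [EuclideanSpace.norm_sq_eq, prod_mul_distrib, ← exp_sum, ← sum_neg_distrib]
  simp_rw [Real.norm_eq_abs, sq_abs]

section Polar

open Module Metric

lemma integral_volumeIoiPow (n : ℕ) (g : ℝ → ℝ) :
    ∫ r, g r ∂Measure.volumeIoiPow n = ∫ r in Ioi (0 : ℝ), r ^ n * g r := by
  simp only [Measure.volumeIoiPow, ENNReal.ofReal]
  rw [integral_withDensity_eq_integral_smul (measurable_subtype_coe.pow_const _).real_toNNReal,
    integral_subtype_comap measurableSet_Ioi fun r => (r ^ n).toNNReal • g r]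
  refine setIntegral_congr_fun measurableSet_Ioi fun r hr => ?_
  rw [NNReal.smul_def, Real.coe_toNNReal _ (pow_nonneg hr.out.le _), smul_eq_mul]

variable {E : Type*} [NormedAddCommGroup E] [NormedSpace ℝ E] [FiniteDimensional ℝ E]
  [MeasurableSpace E] [BorelSpace E] [Nontrivial E] (μ : Measure E) [μ.IsAddHaarMeasure]

theorem integral_homogeneous_mul_radial {f : E → ℝ} {d : ℕ}
    (hf : ∀ (r : ℝ) (x : E), 0 < r → f (r • x) = r ^ d * f x) (g : ℝ → ℝ) :
    ∫ x, f x * g ‖x‖ ∂μ =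
      (∫ ξ : sphere (0 : E) 1, f ξ ∂μ.toSphere) *
        ∫ r in Ioi (0 : ℝ), r ^ (finrank ℝ E - 1 + d) * g r := by
  have h_polar : ∀ x : ({0}ᶜ : Set E), f x * g ‖(x : E)‖ =
      f (homeomorphUnitSphereProd E x).1 * ((homeomorphUnitSphereProd E x).2 ^ d *
        g (homeomorphUnitSphereProd E x).2) := by
    intro x
    have hx : 0 < ‖(x : E)‖ := norm_pos_iff.mpr x.2
    simp only [homeomorphUnitSphereProd_apply_fst_coe, homeomorphUnitSphereProd_apply_snd_coe]
    have h_scale := hf ‖(x : E)‖ (‖(x : E)‖⁻¹ • (x : E)) hx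
    rw [smul_inv_smul₀ hx.ne'] at h_scale
    rw [h_scale]
    ring
  calc ∫ x, f x * g ‖x‖ ∂μ = ∫ x : ({0}ᶜ : Set E), f x * g ‖(x : E)‖ ∂μ.comap (↑) := by
        rw [integral_subtype_comap (measurableSet_singleton _).compl fun x => f x * g ‖x‖,
          restrict_compl_singleton]
    _ = ∫ p, f p.1 * (p.2 ^ d * g p.2) ∂μ.toSphere.prod (.volumeIoiPow (finrank ℝ E - 1)) := by
        rw [← μ.measurePreserving_homeomorphUnitSphereProd.integral_comp
          (Homeomorph.measurableEmbedding _)]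
        exact integral_congr_ae (.of_forall h_polar)
    _ = _ := by
        rw [integral_prod_mul (fun ξ : sphere (0 : E) 1 => f ξ)
          fun r : Ioi (0 : ℝ) => (r : ℝ) ^ d * g r, integral_volumeIoiPow _ fun r => r ^ d * g r]
        simp_rw [pow_add, mul_assoc]

end Polar

section Sphere

variable {m : ℕ}

lemma eval_monomial_eq_mul_prod (α : Fin m →₀ ℕ) (c : ℝ) (x : Fin m → ℝ) :
    eval x (monomial α c) = c * ∏ i, x i ^ α i := by
  rw [eval_monomial, Finsupp.prod_fintype _ _ fun _ => pow_zero _]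

lemma sphereInt_monomial_mul_Gamma (hm : 1 ≤ m) (α : Fin m →₀ ℕ) (c : ℝ) :
    sphereInt m (monomial α c) * (Gamma ((m + α.degree) / 2) / 2) =
      c * ∏ i, (gaussMoment (α i) * √π / √2 ^ α i) := by
  -- makes `EuclideanSpace ℝ (Fin m)` nontrivial, as polar coordinates require
  have : Nonempty (Fin m) := ⟨⟨0, hm⟩⟩
  have h_hom : ∀ (r : ℝ) (x : EuclideanSpace ℝ (Fin m)), 0 < r →
      eval (fun i => (r • x) i) (monomial α c) =
        r ^ α.degree * eval (fun i => x i) (monomial α c) := by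
    intro r x _
    simp only [eval_monomial_eq_mul_prod, PiLp.smul_apply, smul_eq_mul, mul_pow,
      prod_mul_distrib, prod_pow_eq_pow_sum, Finsupp.degree_eq_sum]
    ring
  have h_polar := integral_homogeneous_mul_radial volume
    (f := fun x : EuclideanSpace ℝ (Fin m) => eval (fun i => x i) (monomial α c)) h_hom
    fun r => exp (-r ^ 2)
  rw [finrank_euclideanSpace_fin, integral_Ioi_pow_mul_exp_neg_sq,
    show ((m - 1 + α.degree : ℕ) : ℝ) + 1 = m + α.degree by push_cast [hm]; ring] at h_polar
  rw [sphereInt, ← h_polar]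
  simp only [eval_monomial_eq_mul_prod, mul_assoc, integral_const_mul,
    integral_prod_pow_mul_exp_neg_norm_sq, integral_pow_mul_exp_neg_sq]

noncomputable def pizzettiCoeff (m k : ℕ) : ℝ :=
  2 * π ^ ((m : ℝ) / 2) / (4 ^ k * k ! * Gamma (k + m / 2))

lemma hasSum_pizzetti_monomial (hm : 1 ≤ m) (α : Fin m →₀ ℕ) (c : ℝ) :
    HasSum (fun k => pizzettiCoeff m k * eval (fun _ => 0) ((polyLap m ^ k) (monomial α c)))
      (sphereInt m (monomial α c)) := by
  have h_int := sphereInt_monomial_mul_Gamma hm α c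
  rw [prod_div_distrib, prod_mul_distrib, prod_const, card_univ, Fintype.card_fin,
    prod_pow_eq_pow_sum, ← Finsupp.degree_eq_sum, sqrt_pow_eq_rpow pi_pos.le] at h_int
  have hΓ : 0 < Gamma ((m + α.degree) / 2) := Gamma_pos_of_pos (by positivity)
  simp only [eval_zero_polyLap_pow_monomial, lapMoment]
  rcases Nat.even_or_odd α.degree with ⟨k, hk⟩ | h_odd
  · have h_val : pizzettiCoeff m k * (c * ((2 ^ k * k ! * ∏ i, gaussMoment (α i) : ℕ) : ℝ)) =
        sphereInt m (monomial α c) := by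
      rw [hk, ← two_mul, pow_mul, sq_sqrt zero_le_two, ← eq_div_iff (by positivity)] at h_int
      rw [h_int, pizzettiCoeff]
      push_cast
      rw [show ((m : ℝ) + 2 * k) / 2 = k + m / 2 by ring,
        show (4 : ℝ) ^ k = 2 ^ k * 2 ^ k by rw [← mul_pow]; norm_num]
      field_simp
    convert hasSum_ite_eq k (sphereInt m (monomial α c)) using 2 with k'
    by_cases h : k' = k
    · rw [if_pos (by omega), if_pos h, h, h_val]
    · rw [if_neg (by omega), if_neg h, Nat.cast_zero, mul_zero, mul_zero]
  · have h_zero : sphereInt m (monomial α c) = 0 := by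
      rw [← Nat.cast_prod, prod_gaussMoment_eq_zero_of_odd (by rwa [← Finsupp.degree_eq_sum])]
        at h_int
      simpa [hΓ.ne'] using h_int
    rw [h_zero]
    convert hasSum_zero with k
    rw [if_neg (by rintro h; exact Nat.not_even_iff_odd.mpr h_odd ⟨k, by omega⟩)]
    simp

lemma integrable_eval_sphere (R : MvPolynomial (Fin m) ℝ) :
    Integrable (fun ξ : Metric.sphere (0 : EuclideanSpace ℝ (Fin m)) 1 =>
      eval (fun i => (ξ : EuclideanSpace ℝ (Fin m)) i) R) volume.toSphere :=
  ((MvPolynomial.continuous_eval R).comp (by fun_prop)).integrable_of_hasCompactSupport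
    (.of_compactSpace _)

lemma sphereInt_add (p q : MvPolynomial (Fin m) ℝ) :
    sphereInt m (p + q) = sphereInt m p + sphereInt m q := by
  simp only [sphereInt, map_add]
  exact integral_add (integrable_eval_sphere p) (integrable_eval_sphere q)

theorem hasSum_pizzetti (hm : 1 ≤ m) (R : MvPolynomial (Fin m) ℝ) :
    HasSum (fun k => pizzettiCoeff m k * eval (fun _ => 0) ((polyLap m ^ k) R))
      (sphereInt m R) := by
  induction R using MvPolynomial.induction_on' with
  | monomial α c => exact hasSum_pizzetti_monomial hm α c
  | add p q hp hq =>
    rw [sphereInt_add]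
    simpa only [map_add, mul_add] using hp.add hq

end Sphere

/-- Pizzetti's formula: for `m ≥ 1` and a polynomial `R` on `ℝ^m`,
`∫_{S^{m-1}} R dσ = ∑_{k} (2π^{m/2}/(4^k k! Γ(k+m/2)))·(Δ^k R)(0)`.
In particular the integral of a homogeneous polynomial of odd degree vanishes, and for
`R` homogeneous of even degree `2k` the integral is
`(2π^{m/2}/(4^k k! Γ(k+m/2)))·Δ^k R` (a constant). -/
theorem pizzetti_formula (m : ℕ) (hm : 1 ≤ m) :
    (∀ R : MvPolynomial (Fin m) ℝ,
      sphereInt m R = ∑' k : ℕ,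
        2 * Real.pi ^ ((m : ℝ) / 2) /
            (4 ^ k * k.factorial * Real.Gamma ((k : ℝ) + (m : ℝ) / 2)) *
          MvPolynomial.eval (fun _ => (0 : ℝ)) ((polyLap m ^ k) R)) ∧
    (∀ R : MvPolynomial (Fin m) ℝ, ∀ d : ℕ, Odd d → R.IsHomogeneous d →
      sphereInt m R = 0) ∧
    (∀ R : MvPolynomial (Fin m) ℝ, ∀ k : ℕ, R.IsHomogeneous (2 * k) →
      sphereInt m R =
        2 * Real.pi ^ ((m : ℝ) / 2) /
            (4 ^ k * k.factorial * Real.Gamma ((k : ℝ) + (m : ℝ) / 2)) *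
          MvPolynomial.eval (fun _ => (0 : ℝ)) ((polyLap m ^ k) R)) := by
  refine ⟨fun R => (hasSum_pizzetti hm R).tsum_eq.symm, fun R d hd hR => ?_, fun R k hR => ?_⟩
  · refine (hasSum_pizzetti hm R).unique ?_
    convert hasSum_zero with k
    have hdk : d ≠ 2 * k := by
      rintro rfl
      exact Nat.not_even_iff_odd.mpr hd (even_two_mul k)
    rw [eval_zero_polyLap_pow_eq_zero_of_isHomogeneous hR hdk, mul_zero]
  · refine (hasSum_pizzetti hm R).unique (hasSum_single k fun k' hk' => ?_)
    rw [eval_zero_polyLap_pow_eq_zero_of_isHomogeneous hR (by omega), mul_zero]
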